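/- Let N_n ∈ ℝ^{(5n+3)×8n} be the stoichiometric matrix of the reduced weakly irreversible n-site phosphorylation network, and define E_n ∈ ℝ^{8n×3n} to be the block-diagonal matrix with n diagonal blocks each equal to E₁ ∈ ℝ^{8×3}, where E₁ has columns (1,1,1,0,1,1,1,0)ᵀ, (0,0,1,1,0,0,0,0)ᵀ, (0,0,0,0,0,0,1,1)ᵀ. Then the 3n columns of E_n form a basis of ker(N_n) and are a choice of extreme vectors of the flux cone ker(N_n) ∩ ℝ^{8n}_{≥0}: each column has a support coordinate not shared by any other column, hence every support-minimal element of the cone is a positive multiple of a column of E_n. -/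

import Mathlib

/-!
Since `P₁` vanishes on `ker P₂`, the recursive block form of `N_n` shows by induction that
`N_n w = 0` exactly when every block of eight coordinates of `w` lies in `ker P₂ = range E₁`.
Rows `0, 3, 7` of `E₁` form the identity matrix, so `ker N_n = range E_n` and the coefficients
of `w` in the columns of `E_n` are its own coordinates at these rows; this gives linear
independence and the private support coordinates. A nonnegative kernel vector
`w = ∑ λ_k E_k` has `λ ≥ 0`, so every column with `λ_k > 0` has support inside that of `w`,
and support-minimality leaves a single such column.
-/

open Matrix

namespace Weakly

variable (K : Type*) [CommRing K]

/-- `P₁` block (with `5n+3` rows, as used in forming `N_{n+1}`): nonzero rows are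
row 1 = (−1,0,1,−1,0,0,0,0), row 2 = (0,0,0,0,−1,0,1,−1) and the last row
= (−1,0,0,0,0,0,1,−1). -/
def P1 (n : ℕ) : Matrix (Fin (5 * n + 3)) (Fin 8) K := fun i j =>
  if (i : ℕ) = 0 then ![(-1 : K), 0, 1, -1, 0, 0, 0, 0] j
  else if (i : ℕ) = 1 then ![(0 : K), 0, 0, 0, -1, 0, 1, -1] j
  else if (i : ℕ) = 5 * n + 2 then ![(-1 : K), 0, 0, 0, 0, 0, 1, -1] j
  else 0

def P2 : Matrix (Fin 5) (Fin 8) K :=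
  !![1, -1, 0, 0, 0, 0, 0, 0;
     0, 1, -1, 1, 0, 0, 0, 0;
     0, 0, 0, 0, 1, -1, 0, 0;
     0, 0, 0, 0, 0, 1, -1, 1;
     0, 0, 1, -1, -1, 0, 0, 0]

/-- Stoichiometric matrices of the reduced weakly irreversible `n`-site
phosphorylation networks: `N_{n+1} = [[N_n, P₁],[0, P₂]]` (and `N_0` is the
empty 3×0 matrix, so that `N_1 = [P₁; P₂]`). -/
def Nmat : (n : ℕ) → Matrix (Fin (5 * n + 3)) (Fin (8 * n)) K
  | 0 => 0
  | n + 1 =>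
      Matrix.reindex (finSumFinEquiv.trans (finCongr (by omega)))
        (finSumFinEquiv.trans (finCongr (by omega)))
        (Matrix.fromBlocks (Nmat n) (P1 K n) 0 (P2 K))

/-- `Q₁` block of the reactant matrix. -/
def Q1 (n : ℕ) : Matrix (Fin (5 * n + 3)) (Fin 8) K := fun i j =>
  if (i : ℕ) = 0 then ![(1 : K), 0, 0, 1, 0, 0, 0, 0] j
  else if (i : ℕ) = 1 then ![(0 : K), 0, 0, 0, 1, 0, 0, 1] j
  else if (i : ℕ) = 5 * n + 2 then ![(1 : K), 0, 0, 0, 0, 0, 0, 1] j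
  else 0

def Q2 : Matrix (Fin 5) (Fin 8) K :=
  !![0, 1, 0, 0, 0, 0, 0, 0;
     0, 0, 1, 0, 0, 0, 0, 0;
     0, 0, 0, 0, 0, 1, 0, 0;
     0, 0, 0, 0, 0, 0, 1, 0;
     0, 0, 0, 1, 1, 0, 0, 0]

/-- Reactant matrices: `A_{n+1} = [[A_n, Q₁],[0, Q₂]]`. -/
def Amat : (n : ℕ) → Matrix (Fin (5 * n + 3)) (Fin (8 * n)) K
  | 0 => 0
  | n + 1 =>
      Matrix.reindex (finSumFinEquiv.trans (finCongr (by omega)))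
        (finSumFinEquiv.trans (finCongr (by omega)))
        (Matrix.fromBlocks (Amat n) (Q1 K n) 0 (Q2 K))

/-- Conservation law matrix `W_n = [Id₃, W̄, …, W̄]` with
`W̄ = [[1,1,0,0,0],[0,0,1,1,0],[1,1,1,1,1]]`. -/
def Wmat (n : ℕ) : Matrix (Fin 3) (Fin (5 * n + 3)) K := fun i j =>
  if (j : ℕ) < 3 then (if (i : ℕ) = (j : ℕ) then 1 else 0)
  else if (i : ℕ) = 2 then 1
  else if (i : ℕ) = 0 then (if ((j : ℕ) - 3) % 5 < 2 then 1 else 0)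
  else (if ((j : ℕ) - 3) % 5 = 2 ∨ ((j : ℕ) - 3) % 5 = 3 then 1 else 0)

/-- The entries of the block `E₁ ∈ ℝ^{8×3}` with columns `(1,1,1,0,1,1,1,0)ᵀ`,
`(0,0,1,1,0,0,0,0)ᵀ` and `(0,0,0,0,0,0,1,1)ᵀ`. -/
def E1entry (ir kr : ℕ) : K :=
  if kr = 0 then (if ir = 3 ∨ ir = 7 then 0 else 1)
  else if kr = 1 then (if ir = 2 ∨ ir = 3 then 1 else 0)
  else (if ir = 6 ∨ ir = 7 then 1 else 0)

/-- Extreme matrix `E_n`: block diagonal with `n` copies of `E₁`. -/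
def Emat (n : ℕ) : Matrix (Fin (8 * n)) (Fin (3 * n)) K := fun i k =>
  if (i : ℕ) / 8 = (k : ℕ) / 3 then E1entry K ((i : ℕ) % 8) ((k : ℕ) % 3) else 0

/-- Columns of `E_n`. -/
def Ecol (n : ℕ) : Fin (3 * n) → Fin (8 * n) → K := fun k i => Emat K n i k

/-- `N'_n`: the stoichiometric matrix with its first three rows removed. -/
def Nmat' (n : ℕ) : Matrix (Fin (5 * n)) (Fin (8 * n)) K :=
  (Nmat K n).submatrix (fun i => (⟨(i : ℕ) + 3, by have := i.isLt; omega⟩ : Fin (5 * n + 3))) id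

/-- `A'_n`: the reactant matrix with its first three rows removed. -/
def Amat' (n : ℕ) : Matrix (Fin (5 * n)) (Fin (8 * n)) K :=
  (Amat K n).submatrix (fun i => (⟨(i : ℕ) + 3, by have := i.isLt; omega⟩ : Fin (5 * n + 3))) id

/-- The square matrix `N'_n · diag(E_n λ) · A'ᵀ_n`. -/
def Csq (n : ℕ) (lam : Fin (3 * n) → K) : Matrix (Fin (5 * n)) (Fin (5 * n)) K :=
  Nmat' K n * Matrix.diagonal ((Emat K n).mulVec lam) * (Amat' K n)ᵀ

/-- The matrix `N'_n · diag(E_n λ) · Aᵀ_n`. -/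
def Galemat (n : ℕ) (lam : Fin (3 * n) → K) : Matrix (Fin (5 * n)) (Fin (5 * n + 3)) K :=
  Nmat' K n * Matrix.diagonal ((Emat K n).mulVec lam) * (Amat K n)ᵀ

end Weakly

open Weakly

namespace Matrix

variable {K m ι : Type*} [DecidableEq ι] {E : Matrix m ι K} {p : ι → m}

theorem apply_of_submatrix_eq_one [Zero K] [One K] (hp : E.submatrix p id = 1) (k' k : ι) :
    E (p k') k = if k' = k then 1 else 0 := by
  simpa [one_apply] using congrFun (congrFun hp k') k

variable [Fintype ι]

section CommRing

variable [CommRing K]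

theorem mulVec_comp_of_submatrix_eq_one (hp : E.submatrix p id = 1) (g : ι → K) :
    (E *ᵥ g) ∘ p = g := by
  change E.submatrix p id *ᵥ g = g
  rw [hp, one_mulVec]

theorem col_comp_of_submatrix_eq_one (hp : E.submatrix p id = 1) (k : ι) :
    E.col k ∘ p = Pi.single k 1 := by
  rw [← mulVec_single_one, mulVec_comp_of_submatrix_eq_one hp]

theorem col_eq_mulVec_col_comp (hp : E.submatrix p id = 1) (k : ι) :
    E.col k = E *ᵥ (E.col k ∘ p) := by
  rw [col_comp_of_submatrix_eq_one hp, mulVec_single_one]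

theorem linearIndependent_col_of_submatrix_eq_one (hp : E.submatrix p id = 1) :
    LinearIndependent K E.col := by
  refine LinearIndependent.of_comp (LinearMap.funLeft K K p) ?_
  convert Pi.linearIndependent_single_one ι K using 1
  funext k
  exact col_comp_of_submatrix_eq_one hp k

theorem mem_span_col_iff_of_submatrix_eq_one (hp : E.submatrix p id = 1) (w : m → K) :
    w ∈ Submodule.span K (Set.range E.col) ↔ w = E *ᵥ (w ∘ p) := by
  rw [← range_mulVecLin, LinearMap.mem_range]
  constructor
  · rintro ⟨g, rfl⟩
    rw [mulVecLin_apply, mulVec_comp_of_submatrix_eq_one hp]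
  · intro hw
    exact ⟨w ∘ p, hw.symm⟩

end CommRing

theorem exists_pos_smul_col_of_support_minimal [Field K] [LinearOrder K] [IsStrictOrderedRing K]
    {r : Type*} [Fintype m] (N : Matrix r m K) (hp : E.submatrix p id = 1)
    (hE : ∀ i k, 0 ≤ E i k) (hker : ∀ w, N *ᵥ w = 0 ↔ w = E *ᵥ (w ∘ p)) (w : m → K)
    (hw₀ : w ≠ 0) (hw : N *ᵥ w = 0) (hw_nonneg : ∀ i, 0 ≤ w i)
    (hmin : ∀ v : m → K, v ≠ 0 → N *ᵥ v = 0 → (∀ i, 0 ≤ v i) →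
      {i | v i ≠ 0} ⊆ {i | w i ≠ 0} → {i | v i ≠ 0} = {i | w i ≠ 0}) :
    ∃ (k : ι) (c : K), 0 < c ∧ w = c • E.col k := by
  have hw_eq := (hker w).mp hw
  obtain ⟨k, hk⟩ : ∃ k, w (p k) ≠ 0 := by
    by_contra! h
    exact hw₀ (by rw [hw_eq, show w ∘ p = 0 from funext h, mulVec_zero])
  have hc : 0 < w (p k) := (hw_nonneg _).lt_of_ne' hk
  have hcol_ne : E.col k ≠ 0 := fun h => by
    simpa [apply_of_submatrix_eq_one hp] using congrFun h (p k)
  -- `w = ∑ k', w (p k') • E.col k'` with nonnegative terms, so `supp (E.col k) ⊆ supp w`.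
  have hsupp : {i | E.col k i ≠ 0} ⊆ {i | w i ≠ 0} := by
    intro i hi
    have hle : E i k * w (p k) ≤ w i :=
      calc E i k * w (p k) ≤ ∑ k', E i k' * w (p k') :=
            Finset.single_le_sum (f := fun k' => E i k' * w (p k'))
              (fun k' _ => mul_nonneg (hE i k') (hw_nonneg _)) (Finset.mem_univ k)
        _ = w i := (congrFun hw_eq i).symm
    exact (mul_pos ((hE i k).lt_of_ne' hi) hc |>.trans_le hle).ne'
  have heq := hmin _ hcol_ne ((hker _).mpr (col_eq_mulVec_col_comp hp k)) (fun i => hE i k) hsupp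
  have hwp : w ∘ p = w (p k) • Pi.single k 1 := by
    funext k'
    by_cases hk' : k' = k
    · simp [hk']
    · have : p k' ∉ {i | E.col k i ≠ 0} := by simp [apply_of_submatrix_eq_one hp, hk']
      rw [heq] at this
      simpa [hk'] using this
  refine ⟨k, w (p k), hc, ?_⟩
  conv_lhs => rw [hw_eq, hwp, mulVec_smul, mulVec_single_one]

end Matrix

namespace Weakly

section Blocks

variable {K : Type*} {c n : ℕ}

def blockEquiv (c n : ℕ) : Fin n × Fin c ≃ Fin (c * n) :=
  finProdFinEquiv.trans (finCongr (Nat.mul_comm n c))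

@[simp]
theorem blockEquiv_apply_val (x : Fin n × Fin c) : (blockEquiv c n x : ℕ) = x.2 + c * x.1 :=
  finProdFinEquiv_apply_val x

def block (w : Fin (c * n) → K) (b : Fin n) : Fin c → K :=
  fun r => w (blockEquiv c n (b, r))

theorem funext_block {w v : Fin (c * n) → K} (h : ∀ b, block w b = block v b) : w = v := by
  funext i
  obtain ⟨⟨b, r⟩, rfl⟩ := (blockEquiv c n).surjective i
  exact congrFun (h b) r

def e1Pivot : Fin 3 → Fin 8 := ![0, 3, 7]

def pivot (n : ℕ) (k : Fin (3 * n)) : Fin (8 * n) :=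
  blockEquiv 8 n (Prod.map id e1Pivot ((blockEquiv 3 n).symm k))

theorem block_comp_pivot (w : Fin (8 * n) → K) (b : Fin n) :
    block (w ∘ pivot n) b = block w b ∘ e1Pivot := by
  funext r
  simp [block, pivot]

end Blocks

variable {K : Type*} [CommRing K]

variable (K) in
def E1 : Matrix (Fin 8) (Fin 3) K := of fun i k => E1entry K i k

theorem E1_submatrix_e1Pivot : (E1 K).submatrix e1Pivot id = 1 := by
  ext k k'
  fin_cases k <;> fin_cases k' <;> simp [E1, E1entry, e1Pivot]

theorem P2_mulVec (u : Fin 8 → K) :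
    P2 K *ᵥ u = ![u 0 - u 1, u 1 - u 2 + u 3, u 4 - u 5, u 5 - u 6 + u 7, u 2 - u 3 - u 4] := by
  ext i
  fin_cases i <;> simp [P2, mulVec, dotProduct, Fin.sum_univ_eight, sub_eq_add_neg, add_assoc]

theorem E1_mulVec (μ : Fin 3 → K) :
    E1 K *ᵥ μ = ![μ 0, μ 0, μ 0 + μ 1, μ 1, μ 0, μ 0, μ 0 + μ 2, μ 2] := by
  ext i
  fin_cases i <;> simp [E1, E1entry, mulVec, dotProduct, Fin.sum_univ_three]

theorem P2_mulVec_eq_zero_iff (u : Fin 8 → K) :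
    P2 K *ᵥ u = 0 ↔ u = E1 K *ᵥ (u ∘ e1Pivot) := by
  rw [P2_mulVec, E1_mulVec, funext_iff (f := u)]
  simp only [cons_eq_zero_iff, zero_empty, and_true, Fin.forall_fin_succ, IsEmpty.forall_iff,
    Fin.succ_zero_eq_one, Fin.succ_one_eq_two, Fin.reduceSucc, cons_val, e1Pivot,
    Function.comp_apply]
  grind

theorem P1_mulVec_eq_zero (n : ℕ) {u : Fin 8 → K} (hu : P2 K *ᵥ u = 0) :
    P1 K n *ᵥ u = 0 := by
  simp only [P2_mulVec, cons_eq_zero_iff, zero_empty, and_true] at hu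
  funext i
  simp only [P1, mulVec, dotProduct, Fin.sum_univ_eight, cons_val, Pi.zero_apply]
  split_ifs <;> grind

theorem Nmat_mulVec_eq_zero_iff (n : ℕ) (w : Fin (8 * n) → K) :
    Nmat K n *ᵥ w = 0 ↔ ∀ b, P2 K *ᵥ block w b = 0 := by
  induction n with
  | zero => simp [Nmat]
  | succ n ih =>
    have comp_eq_zero_iff {α β : Type} (v : β → K) (e : α ≃ β) : v ∘ e = 0 ↔ v = 0 :=
      e.surjective.injective_comp_right.eq_iff' rfl
    rw [Nmat, reindex_apply, submatrix_mulVec_equiv, Equiv.symm_symm, comp_eq_zero_iff]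
    set e : Fin (8 * n) ⊕ Fin 8 ≃ Fin (8 * (n + 1)) := finSumFinEquiv.trans (finCongr _)
    have h_last : (w ∘ e) ∘ Sum.inr = block w (Fin.last n) := by
      funext r
      simp only [Function.comp_apply, block, e, Equiv.trans_apply]
      congr 1
      ext
      simp only [finSumFinEquiv_apply_right, finCongr_apply, Fin.val_cast, Fin.val_natAdd,
        blockEquiv_apply_val, Fin.val_last]
      omega
    have h_castSucc (b : Fin n) : block ((w ∘ e) ∘ Sum.inl) b = block w b.castSucc := rfl
    rw [fromBlocks_mulVec, ← Sum.elim_zero_zero, Sum.elim_eq_iff, zero_mulVec, zero_add,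
      Fin.forall_fin_succ', h_last]
    refine and_congr_left fun h_bottom => ?_
    rw [P1_mulVec_eq_zero n h_bottom, add_zero, ih]
    simp only [h_castSucc]

theorem Emat_blockEquiv_blockEquiv (n : ℕ) (b b' : Fin n) (r : Fin 8) (r' : Fin 3) :
    Emat K n (blockEquiv 8 n (b, r)) (blockEquiv 3 n (b', r')) =
      if b = b' then E1 K r r' else 0 := by
  have hdiv8 : ((r : ℕ) + 8 * b) / 8 = b := by omega
  have hmod8 : ((r : ℕ) + 8 * b) % 8 = r := by omega
  have hdiv3 : ((r' : ℕ) + 3 * b') / 3 = b' := by omega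
  have hmod3 : ((r' : ℕ) + 3 * b') % 3 = r' := by omega
  simp only [Emat, blockEquiv_apply_val, hdiv8, hmod8, hdiv3, hmod3, Fin.val_inj, E1, of_apply]

theorem block_Emat_mulVec (n : ℕ) (lam : Fin (3 * n) → K) (b : Fin n) :
    block (Emat K n *ᵥ lam) b = E1 K *ᵥ block lam b := by
  funext r
  simp only [block, mulVec, dotProduct]
  rw [← (blockEquiv 3 n).sum_comp, Fintype.sum_prod_type]
  simp [Emat_blockEquiv_blockEquiv]

theorem Emat_submatrix_pivot (n : ℕ) : (Emat K n).submatrix (pivot n) id = 1 := by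
  ext k k'
  obtain ⟨⟨b, r⟩, rfl⟩ := (blockEquiv 3 n).surjective k
  obtain ⟨⟨b', r'⟩, rfl⟩ := (blockEquiv 3 n).surjective k'
  have h := congrFun (congrFun (E1_submatrix_e1Pivot (K := K)) r) r'
  simp only [submatrix_apply, id_eq] at h
  simp [pivot, Emat_blockEquiv_blockEquiv, h, one_apply, ite_and]

theorem Nmat_mulVec_eq_zero_iff_eq_Emat_mulVec (n : ℕ) (w : Fin (8 * n) → K) :
    Nmat K n *ᵥ w = 0 ↔ w = Emat K n *ᵥ (w ∘ pivot n) := by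
  simp only [Nmat_mulVec_eq_zero_iff, P2_mulVec_eq_zero_iff]
  exact ⟨fun h => funext_block fun b => by rw [block_Emat_mulVec, block_comp_pivot]; exact h b,
    fun h b => by rw [← block_comp_pivot, ← block_Emat_mulVec, ← h]⟩

theorem Emat_nonneg [PartialOrder K] [IsOrderedRing K] (n : ℕ) (i : Fin (8 * n))
    (k : Fin (3 * n)) : 0 ≤ Emat K n i k := by
  unfold Emat E1entry
  split_ifs <;> simp

end Weakly

theorem stmt17_general (n : ℕ) :
    LinearIndependent ℝ (Ecol ℝ n) ∧
    (∀ w : Fin (8 * n) → ℝ,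
        (Nmat ℝ n).mulVec w = 0 ↔ w ∈ Submodule.span ℝ (Set.range (Ecol ℝ n))) ∧
    (∀ k : Fin (3 * n), ∃ i : Fin (8 * n),
        Ecol ℝ n k i ≠ 0 ∧ ∀ k' : Fin (3 * n), k' ≠ k → Ecol ℝ n k' i = 0) ∧
    (∀ k : Fin (3 * n),
        (Nmat ℝ n).mulVec (Ecol ℝ n k) = 0 ∧ (∀ i, 0 ≤ Ecol ℝ n k i)) ∧
    (∀ w : Fin (8 * n) → ℝ, w ≠ 0 → (Nmat ℝ n).mulVec w = 0 → (∀ i, 0 ≤ w i) →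
        (∀ v : Fin (8 * n) → ℝ, v ≠ 0 → (Nmat ℝ n).mulVec v = 0 → (∀ i, 0 ≤ v i) →
            {i | v i ≠ 0} ⊆ {i | w i ≠ 0} → {i | v i ≠ 0} = {i | w i ≠ 0}) →
        ∃ (k : Fin (3 * n)) (c : ℝ), 0 < c ∧ w = c • Ecol ℝ n k) := by
  have hp := Emat_submatrix_pivot (K := ℝ) n
  have hker := Nmat_mulVec_eq_zero_iff_eq_Emat_mulVec (K := ℝ) n
  refine ⟨linearIndependent_col_of_submatrix_eq_one hp,
    fun w => (hker w).trans (mem_span_col_iff_of_submatrix_eq_one hp w).symm,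
    fun k => ⟨pivot n k, by simp [Ecol, apply_of_submatrix_eq_one hp],
      fun k' hk' => by simp [Ecol, apply_of_submatrix_eq_one hp, hk'.symm]⟩,
    fun k => ⟨(hker _).mpr (col_eq_mulVec_col_comp hp k), fun i => Emat_nonneg n i k⟩,
    exists_pos_smul_col_of_support_minimal _ hp (Emat_nonneg n) hker⟩

/-- the `3n` columns of `E_n` (block diagonal with blocks `E₁`)
form a basis of `ker N_n`; each column has a support coordinate not shared by
any other column; and they are a choice of extreme vectors of the flux cone
`ker N_n ∩ ℝ^{8n}_{≥0}`: every support-minimal nonzero element of the cone is a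
positive multiple of a column of `E_n`. -/
theorem stmt17 (n : ℕ) (hn : 1 ≤ n) :
    LinearIndependent ℝ (Ecol ℝ n) ∧
    (∀ w : Fin (8 * n) → ℝ,
        (Nmat ℝ n).mulVec w = 0 ↔ w ∈ Submodule.span ℝ (Set.range (Ecol ℝ n))) ∧
    (∀ k : Fin (3 * n), ∃ i : Fin (8 * n),
        Ecol ℝ n k i ≠ 0 ∧ ∀ k' : Fin (3 * n), k' ≠ k → Ecol ℝ n k' i = 0) ∧
    (∀ k : Fin (3 * n),
        (Nmat ℝ n).mulVec (Ecol ℝ n k) = 0 ∧ (∀ i, 0 ≤ Ecol ℝ n k i)) ∧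
    (∀ w : Fin (8 * n) → ℝ, w ≠ 0 → (Nmat ℝ n).mulVec w = 0 → (∀ i, 0 ≤ w i) →
        (∀ v : Fin (8 * n) → ℝ, v ≠ 0 → (Nmat ℝ n).mulVec v = 0 → (∀ i, 0 ≤ v i) →
            {i | v i ≠ 0} ⊆ {i | w i ≠ 0} → {i | v i ≠ 0} = {i | w i ≠ 0}) →
        ∃ (k : Fin (3 * n)) (c : ℝ), 0 < c ∧ w = c • Ecol ℝ n k) :=
  stmt17_general n
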